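/- The alliance polynomial A(Γ;x) of a finite simple graph Γ is a symmetric polynomial (all exponents of nonzero terms have the same parity, i.e., A is an even or odd function) if and only if all vertex degrees of Γ have the same parity (all even or all odd). -/
import Mathlib


open Finset Polynomial
open scoped Classical

noncomputable section

variable {V : Type*} [Fintype V]

/-- Number of neighbors of `v` inside `S` (as an integer). -/
def degIn (G : SimpleGraph V) (S : Finset V) (v : V) : ℤ :=
  ((S.filter (fun u => G.Adj v u)).card : ℤ)

/-- Number of neighbors of `v` outside `S` (as an integer). -/
def degOut (G : SimpleGraph V) (S : Finset V) (v : V) : ℤ :=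
  ((Sᶜ.filter (fun u => G.Adj v u)).card : ℤ)

/-- The exact index of alliance of `S`. -/
def exactIndex (G : SimpleGraph V) (S : Finset V) : ℤ :=
  if h : S.Nonempty then S.inf' h (fun v => degIn G S v - degOut G S v) else 0

/-- Nonempty vertex subsets inducing a connected subgraph. -/
def goodSets (G : SimpleGraph V) : Finset (Finset V) :=
  Finset.univ.filter (fun S => S.Nonempty ∧ (G.induce (S : Set V)).Connected)

/-- The alliance polynomial. -/
def alliancePoly (G : SimpleGraph V) : Polynomial ℤ :=
  ∑ S ∈ goodSets G, X ^ (((Fintype.card V : ℤ) + exactIndex G S).toNat)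

/-- `A_k(Γ)`: number of connected exact defensive `k`-alliances. -/
def allianceCount (G : SimpleGraph V) (k : ℤ) : ℕ :=
  ((goodSets G).filter (fun S => exactIndex G S = k)).card

end

section Aux

variable {V : Type*} [Fintype V]

lemma degIn_add_degOut (G : SimpleGraph V) (S : Finset V) (v : V) :
    degIn G S v + degOut G S v = G.degree v := by
  unfold degIn degOut
  rw [← Nat.cast_add]
  congr 1
  rw [← Finset.card_union_of_disjoint
      (Finset.disjoint_filter_filter disjoint_compl_right),
    ← Finset.filter_union, Finset.union_compl]
  rw [← SimpleGraph.card_neighborFinset_eq_degree]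
  congr 1
  ext u
  simp [SimpleGraph.mem_neighborFinset]

lemma exists_even_exactIndex_add (G : SimpleGraph V) (S : Finset V) (h : S.Nonempty) :
    ∃ v ∈ S, Even (exactIndex G S + G.degree v) := by
  obtain ⟨v, hv, hfv⟩ := Finset.exists_mem_eq_inf' h (fun v => degIn G S v - degOut G S v)
  refine ⟨v, hv, ?_⟩
  rw [exactIndex, dif_pos h, hfv, ← degIn_add_degOut G S v]
  ring_nf
  exact ⟨degIn G S v, by ring⟩

lemma exactIndex_ge (G : SimpleGraph V) (S : Finset V) (h : S.Nonempty) :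
    -(Fintype.card V : ℤ) ≤ exactIndex G S := by
  obtain ⟨v, hv, hfv⟩ := Finset.exists_mem_eq_inf' h (fun v => degIn G S v - degOut G S v)
  rw [exactIndex, dif_pos h, hfv]
  have h1 : (0 : ℤ) ≤ degIn G S v := Nat.cast_nonneg _
  have h2 : degOut G S v ≤ (Fintype.card V : ℤ) := by
    unfold degOut
    exact_mod_cast Finset.card_le_card (Finset.filter_subset _ _) |>.trans
      (Finset.card_le_univ _)
  omega

lemma mem_support_alliancePoly (G : SimpleGraph V) (i : ℕ) :
    i ∈ (alliancePoly G).support ↔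
      ∃ S ∈ goodSets G, ((Fintype.card V : ℤ) + exactIndex G S).toNat = i := by
  rw [Polynomial.mem_support_iff, alliancePoly, Polynomial.finset_sum_coeff]
  simp only [Polynomial.coeff_X_pow]
  rw [Finset.sum_boole]
  norm_cast
  rw [← ne_eq, Finset.card_ne_zero, Finset.filter_nonempty_iff]
  constructor
  · rintro ⟨S, hS, h⟩; exact ⟨S, hS, h.symm⟩
  · rintro ⟨S, hS, h⟩; exact ⟨S, hS, h.symm⟩

lemma singleton_mem_goodSets (G : SimpleGraph V) (v : V) :
    {v} ∈ goodSets G := by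
  rw [goodSets, Finset.mem_filter]
  refine ⟨Finset.mem_univ _, Finset.singleton_nonempty v, ?_⟩
  rw [SimpleGraph.connected_iff]
  constructor
  · intro a b
    have : a = b := by
      ext
      have ha := a.2
      have hb := b.2
      simp at ha hb
      simp [ha, hb]
    exact this ▸ SimpleGraph.Reachable.refl _
  · exact ⟨⟨v, by simp⟩⟩

lemma exactIndex_singleton (G : SimpleGraph V) (v : V) :
    exactIndex G {v} = -(G.degree v) := by
  rw [exactIndex, dif_pos (Finset.singleton_nonempty v)]
  rw [Finset.inf'_singleton]
  have h := degIn_add_degOut G {v} v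
  have h0 : degIn G {v} v = 0 := by
    unfold degIn
    simp [Finset.filter_singleton, G.irrefl]
  omega

lemma parity_of_mem_support (G : SimpleGraph V) {i : ℕ}
    (hi : i ∈ (alliancePoly G).support) :
    ∃ v : V, (i : ℤ) % 2 = ((Fintype.card V : ℤ) + G.degree v) % 2 := by
  obtain ⟨S, hS, he⟩ := (mem_support_alliancePoly G i).1 hi
  have hSne : S.Nonempty := ((Finset.mem_filter.1 hS).2).1
  obtain ⟨v, hv, heven⟩ := exists_even_exactIndex_add G S hSne
  have hge := exactIndex_ge G S hSne
  have hi' : (i : ℤ) = (Fintype.card V : ℤ) + exactIndex G S := by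
    rw [← he, Int.toNat_of_nonneg (by omega)]
  exact ⟨v, by rw [Int.even_iff] at heven; omega⟩

lemma singleton_parity_mem (G : SimpleGraph V) (v : V) :
    ∃ i ∈ (alliancePoly G).support,
      (i : ℤ) % 2 = ((Fintype.card V : ℤ) + G.degree v) % 2 := by
  refine ⟨((Fintype.card V : ℤ) + exactIndex G {v}).toNat,
    (mem_support_alliancePoly G _).2 ⟨{v}, singleton_mem_goodSets G v, rfl⟩, ?_⟩
  rw [exactIndex_singleton]
  have hd : G.degree v < Fintype.card V := G.degree_lt_card_verts v
  have : (((Fintype.card V : ℤ) + -(G.degree v)).toNat : ℤ)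
      = (Fintype.card V : ℤ) - G.degree v := by
    rw [Int.toNat_of_nonneg (by omega)]; ring
  rw [this]
  omega

end Aux

/-- the alliance polynomial is symmetric (even or odd) iff all degrees
have the same parity. -/
theorem alliancePoly_symmetric_iff {V : Type*} [Fintype V] (G : SimpleGraph V) :
    ((∀ i ∈ (alliancePoly G).support, Even i) ∨ (∀ i ∈ (alliancePoly G).support, Odd i)) ↔
      ((∀ v : V, Even (G.degree v)) ∨ (∀ v : V, Odd (G.degree v))) := by
  constructor
  · intro h
    by_contra hc
    push_neg at hc
    obtain ⟨h1, h2⟩ := hc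
    obtain ⟨v, hv⟩ := h1
    obtain ⟨w, hw⟩ := h2
    rw [Nat.not_even_iff_odd, Nat.odd_iff] at hv
    rw [Nat.not_odd_iff_even, Nat.even_iff] at hw
    obtain ⟨iv, hiv, hivp⟩ := singleton_parity_mem G v
    obtain ⟨iw, hiw, hiwp⟩ := singleton_parity_mem G w
    have hdv : ((G.degree v : ℤ)) % 2 = 1 := by omega
    have hdw : ((G.degree w : ℤ)) % 2 = 0 := by omega
    rcases h with h | h
    · have e1 := h iv hiv
      have e2 := h iw hiw
      rw [Nat.even_iff] at e1 e2
      have e1' : (iv : ℤ) % 2 = 0 := by omega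
      have e2' : (iw : ℤ) % 2 = 0 := by omega
      omega
    · have e1 := h iv hiv
      have e2 := h iw hiw
      rw [Nat.odd_iff] at e1 e2
      have e1' : (iv : ℤ) % 2 = 1 := by omega
      have e2' : (iw : ℤ) % 2 = 1 := by omega
      omega
  · intro hdeg
    have hr : ∃ r : ℤ, ∀ v : V, ((G.degree v : ℤ)) % 2 = r := by
      rcases hdeg with h | h
      · exact ⟨0, fun v => by have := h v; rw [Nat.even_iff] at this; omega⟩
      · exact ⟨1, fun v => by have := h v; rw [Nat.odd_iff] at this; omega⟩
    obtain ⟨r, hr⟩ := hr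
    have key : ∀ i ∈ (alliancePoly G).support,
        (i : ℤ) % 2 = ((Fintype.card V : ℤ) + r) % 2 := by
      intro i hi
      obtain ⟨v, hv⟩ := parity_of_mem_support G hi
      have := hr v
      omega
    by_cases hpar : ((Fintype.card V : ℤ) + r) % 2 = 0
    · left
      intro i hi
      have := key i hi
      rw [Nat.even_iff]
      omega
    · right
      intro i hi
      have := key i hi
      rw [Nat.odd_iff]
      omega
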